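/- Let f : I → ℝ³ be a smooth unit speed space-like curve on S²₁ (⟨f,f⟩ = 1, ⟨f',f'⟩ = 1). Let a > 0 and ξ₁ ∈ ℝ be constants with tanh(ξ₁) ≠ 0, assume tanh(ξ₁)·κ_g(v) < 1 for all v, and define γ(v) = a·∫₀ᵛ f(t)dt + a·tanh(ξ₁)·∫₀ᵛ f(t) × f'(t) dt. Then γ is a space-like Bertrand curve: with A = a ≠ 0 and C = a·tanh(ξ₁) ≠ 0, the curvature κ and torsion τ of γ (given by κ = ‖γ' × γ''‖ / ⟨γ', γ'⟩^{3/2} and τ = det(γ', γ'', γ''') / ‖γ' × γ''‖²) satisfy A·κ(v) + C·τ(v) = 1 for all v ∈ I. -/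

import Mathlib

noncomputable section

open Real

/-- The Lorentzian (Minkowski) inner product on ℝ³: ⟨x,y⟩ = x₁y₁ + x₂y₂ − x₃y₃. -/
def mink (x y : Fin 3 → ℝ) : ℝ := x 0 * y 0 + x 1 * y 1 - x 2 * y 2

/-- The Lorentzian cross product on ℝ³:
x × y = (x₂y₃ − x₃y₂, x₃y₁ − x₁y₃, x₂y₁ − x₁y₂). -/
def mcross (x y : Fin 3 → ℝ) : Fin 3 → ℝ :=
  ![x 1 * y 2 - x 2 * y 1, x 2 * y 0 - x 0 * y 2, x 1 * y 0 - x 0 * y 1]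

/-- Determinant of three vectors in ℝ³ (as the rows of a 3×3 matrix). -/
def mdet (x y z : Fin 3 → ℝ) : ℝ := Matrix.det (Matrix.of ![x, y, z])

/-- The pseudo norm ‖x‖ = √|⟨x,x⟩|. -/
def mnorm (x : Fin 3 → ℝ) : ℝ := Real.sqrt |mink x x|

lemma mcross_apply (x y : Fin 3 → ℝ) :
    mcross x y 0 = x 1 * y 2 - x 2 * y 1 ∧ mcross x y 1 = x 2 * y 0 - x 0 * y 2 ∧
    mcross x y 2 = x 1 * y 0 - x 0 * y 1 := by
  refine ⟨rfl, rfl, rfl⟩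

lemma mdet_expand (x y z : Fin 3 → ℝ) :
    mdet x y z = x 0 * (y 1 * z 2 - y 2 * z 1) - x 1 * (y 0 * z 2 - y 2 * z 0)
      + x 2 * (y 0 * z 1 - y 1 * z 0) := by
  simp [mdet, Matrix.det_fin_three]; ring

lemma L1 (x y z : Fin 3 → ℝ) : mink (mcross x y) z = mdet x y z := by
  simp [mink, mcross, mdet_expand]; ring

lemma mink_symm (x y : Fin 3 → ℝ) : mink x y = mink y x := by simp [mink]; ring

lemma mdet_cyc (x y z : Fin 3 → ℝ) : mdet x y z = mdet y z x := by
  simp [mdet_expand]; ring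

lemma L3 (x y z : Fin 3 → ℝ) :
    mcross x (mcross y z) = mink x y • z - mink x z • y := by
  funext i
  fin_cases i <;>
    simp [mcross, mink, Matrix.cons_val_zero, Matrix.cons_val_one, Matrix.head_cons] <;> ring

lemma mcross_anticomm (x y : Fin 3 → ℝ) : mcross x y = -mcross y x := by
  funext i; fin_cases i <;> simp [mcross] <;> ring

lemma mcross_self (x : Fin 3 → ℝ) : mcross x x = 0 := by
  funext i; fin_cases i <;> simp [mcross] <;> ring

lemma mcross_add_left (x y z : Fin 3 → ℝ) : mcross (x + y) z = mcross x z + mcross y z := by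
  funext i; fin_cases i <;> simp [mcross] <;> ring

lemma mcross_add_right (x y z : Fin 3 → ℝ) : mcross x (y + z) = mcross x y + mcross x z := by
  funext i; fin_cases i <;> simp [mcross] <;> ring

lemma mcross_smul_left (a : ℝ) (x z : Fin 3 → ℝ) : mcross (a • x) z = a • mcross x z := by
  funext i; fin_cases i <;> simp [mcross] <;> ring

lemma mcross_smul_right (a : ℝ) (x z : Fin 3 → ℝ) : mcross x (a • z) = a • mcross x z := by
  funext i; fin_cases i <;> simp [mcross] <;> ring

lemma mcross_neg_right (x z : Fin 3 → ℝ) : mcross x (-z) = -mcross x z := by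
  funext i; fin_cases i <;> simp [mcross] <;> ring

lemma mink_add_left (x y z : Fin 3 → ℝ) : mink (x + y) z = mink x z + mink y z := by
  simp [mink]; ring

lemma mink_add_right (x y z : Fin 3 → ℝ) : mink x (y + z) = mink x y + mink x z := by
  simp [mink]; ring

lemma mink_smul_left (a : ℝ) (x z : Fin 3 → ℝ) : mink (a • x) z = a * mink x z := by
  simp [mink]; ring

lemma mink_smul_right (a : ℝ) (x z : Fin 3 → ℝ) : mink x (a • z) = a * mink x z := by
  simp [mink]; ring

lemma mink_neg_right (x z : Fin 3 → ℝ) : mink x (-z) = -mink x z := by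
  simp [mink]; ring

lemma mink_neg_left (x z : Fin 3 → ℝ) : mink (-x) z = -mink x z := by
  simp [mink]; ring

lemma L4 (x y z w : Fin 3 → ℝ) :
    mink (mcross x y) (mcross z w) = mink x w * mink y z - mink x z * mink y w := by
  simp [mink, mcross]; ring

lemma mink_self_mcross (x z : Fin 3 → ℝ) : mink x (mcross x z) = 0 := by
  simp [mink, mcross]; ring

lemma cramer3 (u x y z : Fin 3 → ℝ) (i : Fin 3) :
    u i * mdet x y z = mdet u y z * x i + mdet x u z * y i + mdet x y u * z i := by
  fin_cases i <;> simp [mdet_expand] <;> ring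

lemma mdet_add3 (x y z w : Fin 3 → ℝ) :
    mdet x y (z + w) = mdet x y z + mdet x y w := by simp [mdet_expand]; ring

lemma mdet_smul3 (a : ℝ) (x y z : Fin 3 → ℝ) : mdet x y (a • z) = a * mdet x y z := by
  simp [mdet_expand]; ring

lemma hasDerivAt_mcross {u w : ℝ → Fin 3 → ℝ} {u' w' : Fin 3 → ℝ} {v : ℝ}
    (hu : HasDerivAt u u' v) (hw : HasDerivAt w w' v) :
    HasDerivAt (fun x => mcross (u x) (w x)) (mcross u' (w v) + mcross (u v) w') v := by
  rw [hasDerivAt_pi] at hu hw ⊢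
  intro i
  fin_cases i
  · show HasDerivAt (fun x => u x 1 * w x 2 - u x 2 * w x 1)
      (u' 1 * w v 2 - u' 2 * w v 1 + (u v 1 * w' 2 - u v 2 * w' 1)) v
    exact (((hu 1).mul (hw 2)).sub ((hu 2).mul (hw 1))).congr_deriv (by ring)
  · show HasDerivAt (fun x => u x 2 * w x 0 - u x 0 * w x 2)
      (u' 2 * w v 0 - u' 0 * w v 2 + (u v 2 * w' 0 - u v 0 * w' 2)) v
    exact (((hu 2).mul (hw 0)).sub ((hu 0).mul (hw 2))).congr_deriv (by ring)
  · show HasDerivAt (fun x => u x 1 * w x 0 - u x 0 * w x 1)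
      (u' 1 * w v 0 - u' 0 * w v 1 + (u v 1 * w' 0 - u v 0 * w' 1)) v
    exact (((hu 1).mul (hw 0)).sub ((hu 0).mul (hw 1))).congr_deriv (by ring)

lemma hasDerivAt_mink {u w : ℝ → Fin 3 → ℝ} {u' w' : Fin 3 → ℝ} {v : ℝ}
    (hu : HasDerivAt u u' v) (hw : HasDerivAt w w' v) :
    HasDerivAt (fun x => mink (u x) (w x)) (mink u' (w v) + mink (u v) w') v := by
  rw [hasDerivAt_pi] at hu hw
  simp only [mink]
  exact ((((hu 0).mul (hw 0)).add ((hu 1).mul (hw 1))).sub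
    ((hu 2).mul (hw 2))).congr_deriv (by ring)

-- extra algebra lemmas
lemma mink_comb (a b c d : ℝ) (x y z w : Fin 3 → ℝ) :
    mink (a • x + b • y) (c • z + d • w) =
      a*c*mink x z + a*d*mink x w + b*c*mink y z + b*d*mink y w := by
  simp [mink]; ring

lemma mink_comb_left (a b : ℝ) (x y z : Fin 3 → ℝ) :
    mink (a • x + b • y) z = a * mink x z + b * mink y z := by
  simp [mink]; ring

lemma mink_self_mcross' (x z : Fin 3 → ℝ) : mink z (mcross x z) = 0 := by
  simp [mink, mcross]; ring

lemma continuous_mcross {u w : ℝ → Fin 3 → ℝ} (hu : Continuous u) (hw : Continuous w) :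
    Continuous (fun x => mcross (u x) (w x)) := by
  have cu : ∀ j, Continuous fun x => u x j := fun j => (continuous_apply j).comp hu
  have cw : ∀ j, Continuous fun x => w x j := fun j => (continuous_apply j).comp hw
  apply continuous_pi; intro i
  fin_cases i
  · exact ((cu 1).mul (cw 2)).sub ((cu 2).mul (cw 1))
  · exact ((cu 2).mul (cw 0)).sub ((cu 0).mul (cw 2))
  · exact ((cu 1).mul (cw 0)).sub ((cu 0).mul (cw 1))


/-- γ(v) = a·∫₀ᵛ f + a·tanh ξ₁·∫₀ᵛ f × f' (f a unit speed space-like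
curve on S²₁, tanh ξ₁ ≠ 0) is a space-like Bertrand curve: with the non-zero
constants A = a and C = a·tanh ξ₁ one has A·κ + C·τ = 1 on I. -/
theorem deSitter_gives_spacelike_bertrand
    (a b : ℝ) (I : Set ℝ) (hI : I = Set.Ioo a b) (h0 : (0:ℝ) ∈ I)
    (f : ℝ → Fin 3 → ℝ) (hf : ContDiff ℝ (⊤ : ℕ∞) f)
    (hf1 : ∀ v ∈ I, mink (f v) (f v) = 1)
    (hf2 : ∀ v ∈ I, mink (deriv f v) (deriv f v) = 1)
    (κg : ℝ → ℝ) (hκg : ∀ v, κg v = mdet (f v) (deriv f v) (deriv (deriv f) v))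
    (A ξ : ℝ) (hA : 0 < A)
    (hξκ : ∀ v ∈ I, Real.tanh ξ * κg v < 1)
    (γ : ℝ → Fin 3 → ℝ)
    (hγ : ∀ v, γ v = A • (∫ w in (0:ℝ)..v, f w) +
        (A * Real.tanh ξ) • (∫ w in (0:ℝ)..v, mcross (f w) (deriv f w)))
    (κ τ : ℝ → ℝ)
    (hκdef : ∀ v, κ v = mnorm (mcross (deriv γ v) (deriv (deriv γ) v)) /
        (mink (deriv γ v) (deriv γ v)) ^ (3/2 : ℝ))
    (hτdef : ∀ v, τ v =
        mdet (deriv γ v) (deriv (deriv γ) v) (deriv (deriv (deriv γ)) v) /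
        (mnorm (mcross (deriv γ v) (deriv (deriv γ) v))) ^ 2)
    (hξ0 : Real.tanh ξ ≠ 0) :
    A ≠ 0 ∧ A * Real.tanh ξ ≠ 0 ∧
      ∀ v ∈ I, A * κ v + (A * Real.tanh ξ) * τ v = 1 := by
  have hA0 : A ≠ 0 := ne_of_gt hA
  refine ⟨hA0, mul_ne_zero hA0 hξ0, ?_⟩
  set t : ℝ := Real.tanh ξ with ht
  set c : ℝ := A * t with hc
  -- |t| < 1
  have ht2 : t^2 < 1 := by
    have hch := Real.cosh_pos ξ
    have h1 : t * Real.cosh ξ = Real.sinh ξ := by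
      rw [ht, Real.tanh_eq_sinh_div_cosh]; field_simp
    have h2 : Real.cosh ξ ^ 2 = Real.sinh ξ ^ 2 + 1 := Real.cosh_sq ξ
    have h3 : t^2 * Real.cosh ξ^2 = Real.sinh ξ^2 := by rw [← h1]; ring
    nlinarith [h3, h2, mul_pos hch hch]
  have hIopen : IsOpen I := hI ▸ isOpen_Ioo
  -- smoothness bookkeeping
  set f1 : ℝ → Fin 3 → ℝ := deriv f with hf1def
  set f2 : ℝ → Fin 3 → ℝ := deriv f1 with hf2def
  set f3 : ℝ → Fin 3 → ℝ := deriv f2 with hf3def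
  have hcf : ContDiff ℝ ((⊤:ℕ∞) : WithTop ℕ∞) f := hf.of_le (by simp)
  have hcf1 : ContDiff ℝ ((⊤:ℕ∞) : WithTop ℕ∞) f1 := (contDiff_infty_iff_deriv.mp hcf).2
  have hcf2 : ContDiff ℝ ((⊤:ℕ∞) : WithTop ℕ∞) f2 := (contDiff_infty_iff_deriv.mp hcf1).2
  have Hf : ∀ v, HasDerivAt f (f1 v) v := fun v => (hcf.differentiable (by simp) v).hasDerivAt
  have Hf1 : ∀ v, HasDerivAt f1 (f2 v) v := fun v => (hcf1.differentiable (by simp) v).hasDerivAt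
  have Hf2 : ∀ v, HasDerivAt f2 (f3 v) v := fun v => (hcf2.differentiable (by simp) v).hasDerivAt
  -- derivatives of γ
  set g : ℝ → Fin 3 → ℝ := fun w => mcross (f w) (f1 w) with hgdef
  have hgc : Continuous g := continuous_mcross hcf.continuous hcf1.continuous
  set G1 : ℝ → Fin 3 → ℝ := fun v => A • f v + c • g v with hG1def
  set G2 : ℝ → Fin 3 → ℝ := fun v => A • f1 v + c • mcross (f v) (f2 v) with hG2def
  set G3 : ℝ → Fin 3 → ℝ :=
    fun v => A • f2 v + c • (mcross (f1 v) (f2 v) + mcross (f v) (f3 v)) with hG3def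
  have hγfun : γ = fun v => A • (∫ w in (0:ℝ)..v, f w) + c • (∫ w in (0:ℝ)..v, g w) :=
    funext hγ
  have HDγ : ∀ v, HasDerivAt γ (G1 v) v := by
    intro v
    rw [hγfun]
    have h1 : HasDerivAt (fun u => ∫ w in (0:ℝ)..u, f w) (f v) v :=
      intervalIntegral.integral_hasDerivAt_right (hcf.continuous.intervalIntegrable _ _)
        (hcf.continuous.stronglyMeasurableAtFilter _ _) hcf.continuous.continuousAt
    have h2 : HasDerivAt (fun u => ∫ w in (0:ℝ)..u, g w) (g v) v :=
      intervalIntegral.integral_hasDerivAt_right (hgc.intervalIntegrable _ _)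
        (hgc.stronglyMeasurableAtFilter _ _) hgc.continuousAt
    exact (h1.const_smul A).add (h2.const_smul c)
  have HDG1 : ∀ v, HasDerivAt G1 (G2 v) v := by
    intro v
    have h2 : HasDerivAt g (mcross (f1 v) (f1 v) + mcross (f v) (f2 v)) v :=
      hasDerivAt_mcross (Hf v) (Hf1 v)
    rw [mcross_self, zero_add] at h2
    exact ((Hf v).const_smul A).add (h2.const_smul c)
  have HDG2 : ∀ v, HasDerivAt G2 (G3 v) v := by
    intro v
    have h2 : HasDerivAt (fun x => mcross (f x) (f2 x))
        (mcross (f1 v) (f2 v) + mcross (f v) (f3 v)) v :=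
      hasDerivAt_mcross (Hf v) (Hf2 v)
    exact ((Hf1 v).const_smul A).add (h2.const_smul c)
  have hd1 : deriv γ = G1 := funext fun v => (HDγ v).deriv
  have hd2 : deriv (deriv γ) = G2 := by rw [hd1]; exact funext fun v => (HDG1 v).deriv
  have hd3 : deriv (deriv (deriv γ)) = G3 := by rw [hd2]; exact funext fun v => (HDG2 v).deriv
  -- derivative of functions constant on I vanish on I
  have derivzero : ∀ (φ : ℝ → ℝ) (C : ℝ), (∀ w ∈ I, φ w = C) → ∀ v ∈ I, deriv φ v = 0 := by
    intro φ C hφ v hv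
    have he : φ =ᶠ[nhds v] fun _ => C :=
      Filter.eventuallyEq_of_mem (hIopen.mem_nhds hv) hφ
    rw [he.deriv_eq, deriv_const]
  -- scalar constraints
  have c2 : ∀ v ∈ I, mink (f v) (f1 v) = 0 := by
    intro v hv
    have hd := (hasDerivAt_mink (Hf v) (Hf v)).deriv
    have h0 := derivzero _ 1 hf1 v hv
    rw [hd] at h0
    have hs := mink_symm (f1 v) (f v)
    linarith
  have c4 : ∀ v ∈ I, mink (f v) (f2 v) = -1 := by
    intro v hv
    have hd := (hasDerivAt_mink (Hf v) (Hf1 v)).deriv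
    have h0 := derivzero _ 0 c2 v hv
    rw [hd] at h0
    have hs := mink_symm (f1 v) (f1 v)
    have := hf2 v hv
    linarith [mink_symm (f1 v) (f v)]
  have c5 : ∀ v ∈ I, mink (f1 v) (f2 v) = 0 := by
    intro v hv
    have hd := (hasDerivAt_mink (Hf1 v) (Hf1 v)).deriv
    have h0 := derivzero _ 1 hf2 v hv
    rw [hd] at h0
    linarith [mink_symm (f2 v) (f1 v)]
  have c6 : ∀ v ∈ I, mink (f v) (f3 v) = 0 := by
    intro v hv
    have hd := (hasDerivAt_mink (Hf v) (Hf2 v)).deriv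
    have h0 := derivzero _ (-1) c4 v hv
    rw [hd] at h0
    linarith [mink_symm (f1 v) (f2 v), c5 v hv]
  have c7 : ∀ v ∈ I, mink (f2 v) (f2 v) + mink (f1 v) (f3 v) = 0 := by
    intro v hv
    have hd := (hasDerivAt_mink (Hf1 v) (Hf2 v)).deriv
    have h0 := derivzero _ 0 c5 v hv
    rw [hd] at h0
    linarith [mink_symm (f2 v) (f1 v)]
  -- main computation at a point
  intro v hv
  set F : Fin 3 → ℝ := f v
  set F1 : Fin 3 → ℝ := f1 v
  set F2 : Fin 3 → ℝ := f2 v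
  set F3 : Fin 3 → ℝ := f3 v
  set N : Fin 3 → ℝ := mcross F F1 with hN
  set k : ℝ := κg v with hkdef
  have hk : mdet F F1 F2 = k := (hκg v).symm
  have hFF : mink F F = 1 := hf1 v hv
  have hFF1 : mink F F1 = 0 := c2 v hv
  have hF1F1 : mink F1 F1 = 1 := hf2 v hv
  have hFF2 : mink F F2 = -1 := c4 v hv
  have hF1F2 : mink F1 F2 = 0 := c5 v hv
  have hFF3 : mink F F3 = 0 := c6 v hv
  have hsum : mink F2 F2 + mink F1 F3 = 0 := c7 v hv
  have hNN : mink N N = -1 := by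
    rw [hN, L4, mink_symm F1 F, hFF1, hFF, hF1F1]; ring
  have hFN : mink F N = 0 := mink_self_mcross F F1
  have hNF : mink N F = 0 := by rw [mink_symm]; exact hFN
  have hNF1 : mink N F1 = 0 := by
    rw [hN, mink_symm]; exact mink_self_mcross' F F1
  have hNF2 : mink N F2 = k := by rw [hN, L1, hk]
  have hFxN : mcross F N = F1 := by
    rw [hN, L3, hFF, hFF1, one_smul, zero_smul, sub_zero]
  have hF1xN : mcross F1 N = -F := by
    rw [hN, L3, mink_symm F1 F, hFF1, hF1F1, zero_smul, one_smul, zero_sub]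
  -- F2 in the frame
  have hF2eq : F2 = (-1 : ℝ) • F + (-k) • N := by
    have hd1' : mdet F F1 N = -1 := by rw [← L1, ← hN]; exact hNN
    have hd2' : mdet F2 F1 N = 1 := by
      rw [mdet_cyc, ← L1, hF1xN, mink_neg_left, hFF2]; ring
    have hd3' : mdet F F2 N = 0 := by
      rw [mdet_cyc, mdet_cyc, ← L1, mcross_anticomm, hFxN, mink_neg_left, hF1F2]; ring
    funext i
    have hcr := cramer3 F2 F F1 N i
    rw [hd1', hd2', hd3', hk] at hcr
    simp only [Pi.add_apply, Pi.smul_apply, smul_eq_mul]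
    linarith
  have hF2F2 : mink F2 F2 = 1 - k^2 := by
    rw [hF2eq, mink_comb, hFF, hFN, hNF, hNN]; ring
  have hF1F3 : mink F1 F3 = k^2 - 1 := by linarith
  -- cross products with F2
  have hFxF2 : mcross F F2 = (-k) • F1 := by
    rw [hF2eq, mcross_add_right, mcross_smul_right, mcross_smul_right, mcross_self, hFxN]
    simp
  have hF1xF2 : mcross F1 F2 = N + k • F := by
    rw [hF2eq, mcross_add_right, mcross_smul_right, mcross_smul_right,
      mcross_anticomm F1 F, ← hN, hF1xN]
    funext i; simp; try ring
  -- closed forms for the derivatives of γ at v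
  have hG1v : G1 v = A • F + c • N := rfl
  have hG2v : G2 v = (A - c*k) • F1 := by
    rw [hG2def]
    show A • F1 + c • mcross F F2 = (A - c*k) • F1
    rw [hFxF2]
    funext i; simp; try ring
  have hG3v : G3 v = A • F2 + c • (N + k • F) + c • mcross F F3 := by
    rw [hG3def]
    show A • F2 + c • (mcross F1 F2 + mcross F F3) = _
    rw [hF1xF2]
    funext i; simp; try ring
  -- the cross product W = γ' × γ''
  have hW : mcross (G1 v) (G2 v) = (A - c*k) • (A • N + c • F) := by
    rw [hG1v, hG2v, mcross_smul_right, mcross_add_left, mcross_smul_left, mcross_smul_left,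
      ← hN, mcross_anticomm N F1, hF1xN]
    funext i; simp; try ring
  -- scalar quantities
  have E1 : mink (G1 v) (G1 v) = A^2 * (1 - t^2) := by
    rw [hG1v, mink_comb, hFF, hFN, hNF, hNN, hc]; ring
  have E2 : mink (mcross (G1 v) (G2 v)) (mcross (G1 v) (G2 v)) =
      -(A^4 * (1 - t^2) * (1 - t*k)^2) := by
    rw [hW, mink_smul_left, mink_smul_right, mink_comb, hNN, hNF, hFN, hFF, hc]; ring
  have E3 : mdet (G1 v) (G2 v) (G3 v) = A^3 * (1 - t*k)^2 * (k - t) := by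
    have hNX : mink N (N + k • F) = -1 := by
      rw [mink_add_right, mink_smul_right, hNN, hNF]; ring
    have hFX : mink F (N + k • F) = k := by
      rw [mink_add_right, mink_smul_right, hFN, hFF]; ring
    have hNY : mink N (mcross F F3) = 1 - k^2 := by
      rw [hN, L4, hFF3, mink_symm F1 F, hFF1, hFF, hF1F3]; ring
    have hFY : mink F (mcross F F3) = 0 := mink_self_mcross F F3
    rw [← L1, hW, hG3v, mink_smul_left]
    rw [mink_add_right, mink_add_right]
    rw [mink_smul_right, mink_smul_right, mink_smul_right, mink_comb_left, mink_comb_left,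
      mink_comb_left, hNF2, hFF2, hNX, hFX, hNY, hFY, hc]; ring
  -- positivity facts
  have htk : 1 - t*k > 0 := by have := hξκ v hv; rw [← hkdef] at this; linarith
  have ht2' : (0:ℝ) < 1 - t^2 := by linarith
  set S : ℝ := Real.sqrt (1 - t^2) with hSdef
  have hS2 : S^2 = 1 - t^2 := Real.sq_sqrt (le_of_lt ht2')
  have hSpos : 0 < S := Real.sqrt_pos.mpr ht2'
  -- the norm of γ' × γ''
  have hnorm : mnorm (mcross (G1 v) (G2 v)) = A^2 * (1 - t*k) * S := by
    rw [mnorm, E2, abs_neg, abs_of_nonneg (by positivity), hSdef]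
    rw [show A^4 * (1 - t^2) * (1 - t*k)^2 = (A^2*(1-t*k))^2 * (1 - t^2) by ring]
    rw [Real.sqrt_mul (sq_nonneg _), Real.sqrt_sq (by positivity)]
  -- the (3/2)-power of ⟨γ',γ'⟩
  have hpow : (mink (G1 v) (G1 v)) ^ (3/2 : ℝ) = A^2 * (1-t^2) * (A * S) := by
    rw [E1, show (3/2 : ℝ) = 1 + 1/2 by norm_num,
      Real.rpow_add (by positivity), Real.rpow_one, ← Real.sqrt_eq_rpow,
      Real.sqrt_mul (sq_nonneg A), Real.sqrt_sq (le_of_lt hA), hSdef]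
  -- final computation
  have hκv : κ v = A^2 * (1 - t*k) * S / (A^2 * (1-t^2) * (A * S)) := by
    rw [hκdef v, hd2, hd1, hnorm, hpow]
  have hτv : τ v = A^3 * (1 - t*k)^2 * (k - t) / (A^2 * (1 - t*k) * S)^2 := by
    rw [hτdef v, hd3, hd2, hd1, E3, hnorm]
  rw [hκv, hτv]
  have hAS : A * S ≠ 0 := by positivity
  have htk0 : (1 : ℝ) - t*k ≠ 0 := ne_of_gt htk
  rw [← hS2]
  field_simp
  linear_combination (-A) * hS2
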